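/- arXiv:2604.13898 — 2 statements merged into one kernel-verified Lean document; each statement's English description precedes it below -/
import Mathlib

section
/- Let X be a complete length space with metric d, and let W(X) be the warped product X × [0,∞) with warping function e^{-t}. Fix r > 0 and set R = e^{2r}·r. Then for any t > r and any point (x,t) ∈ W(X), the closed ball of radius r about (x,t) in W(X) is contained in B_R(x; e^{-(t-r)}d) × [t-r, ∞), where B_R(x; e^{-(t-r)}d) denotes the ball of radius R about x in X with the rescaled metric e^{-(t-r)}d. -/
open Set Metric ENNReal Filter

/-- A metric space is a length space if the distance between any two points is the
infimum of lengths (total variations) of continuous curves joining them. -/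
def IsLengthSpace (X : Type*) [MetricSpace X] : Prop :=
  ∀ x y : X, edist x y =
    ⨅ (γ : ℝ → X) (_ : ContinuousOn γ (Set.Icc 0 1)) (_ : γ 0 = x) (_ : γ 1 = y),
      eVariationOn γ (Set.Icc 0 1)

/-- The warped length (with warping function `e^{-t}` applied to the base distance `d`)
of a curve `γ` in `X × ℝ` over the interval `[a,b]`, defined as a supremum over
partitions of sums of "warped chord lengths". -/
noncomputable def wLength {X : Type*} (d : X → X → ℝ) (γ : ℝ → X × ℝ) (a b : ℝ) : ℝ≥0∞ :=
  ⨆ p : {p : ℕ × (ℕ → ℝ) // Monotone p.2 ∧ ∀ i, p.2 i ∈ Set.Icc a b},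
    ∑ i ∈ Finset.range p.1.1,
      ENNReal.ofReal (Real.sqrt
        ((Real.exp (-(⨆ s ∈ Set.Icc (p.1.2 i) (p.1.2 (i + 1)), (γ s).2)) *
            d (γ (p.1.2 i)).1 (γ (p.1.2 (i + 1))).1) ^ 2 +
          ((γ (p.1.2 (i + 1))).2 - (γ (p.1.2 i)).2) ^ 2))

/-- The warped-product path (pseudo)distance on `X × [lo, ∞)`: the infimum of warped
lengths of Lipschitz curves joining two points and staying at height `≥ lo`. -/
noncomputable def wDist {X : Type*} [MetricSpace X] (d : X → X → ℝ) (lo : ℝ)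
    (p q : X × ℝ) : ℝ≥0∞ :=
  ⨅ (γ : ℝ → X × ℝ) (_ : ∃ K, LipschitzWith K γ) (_ : γ 0 = p) (_ : γ 1 = q)
    (_ : ∀ t ∈ Set.Icc (0 : ℝ) 1, lo ≤ (γ t).2), wLength d γ 0 1

/-- Real-valued version of the warped distance. -/
noncomputable def wDistR {X : Type*} [MetricSpace X] (d : X → X → ℝ) (lo : ℝ)
    (p q : X × ℝ) : ℝ :=
  (wDist d lo p q).toReal

/-- `f` is a `(K, C)`-quasi-isometric embedding. -/
def QIEmb {X Y : Type*} [MetricSpace X] [MetricSpace Y] (K C : ℝ) (f : X → Y) : Prop :=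
  ∀ a b : X, dist a b / K - C ≤ dist (f a) (f b) ∧ dist (f a) (f b) ≤ K * dist a b + C

/-- `f` is a `(K, C)`-quasi-isometry: a quasi-isometric embedding with `C`-dense image. -/
def QuasiIsometry {X Y : Type*} [MetricSpace X] [MetricSpace Y] (K C : ℝ) (f : X → Y) : Prop :=
  QIEmb K C f ∧ ∀ y : Y, ∃ x : X, dist y (f x) ≤ C

/-!
A curve of warped length at most `L` starting at height `t` changes height by at most `L`, so
it stays below height `t + L`; there the base metric is shrunk by at most `e^{-(t + L)}`, so the
base displacement is at most `L e^{t + L}`. Letting `L` decrease to `r` gives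
`d(x, y) ≤ r e^{t + r}`, i.e. `e^{-(t - r)} d(x, y) ≤ e^{2r} r`, and `|s - t| ≤ r`.
-/

section WarpedLength

variable {X : Type*}

lemma ofReal_chord_le_wLength (d : X → X → ℝ) (γ : ℝ → X × ℝ) {a b u₀ u₁ : ℝ}
    (h₀ : u₀ ∈ Icc a b) (h₁ : u₁ ∈ Icc a b) (h₀₁ : u₀ ≤ u₁) :
    ENNReal.ofReal (Real.sqrt
        ((Real.exp (-(⨆ s ∈ Icc u₀ u₁, (γ s).2)) * d (γ u₀).1 (γ u₁).1) ^ 2 +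
          ((γ u₁).2 - (γ u₀).2) ^ 2)) ≤ wLength d γ a b := by
  let p : ℕ → ℝ := fun i => if i = 0 then u₀ else u₁
  have hp_mono : Monotone p := by
    intro i j hij
    by_cases hi : i = 0 <;> by_cases hj : j = 0 <;> simp [p, hi, hj, h₀₁]
    omega
  have hp_mem : ∀ i, p i ∈ Icc a b := by
    intro i; by_cases hi : i = 0 <;> simp [p, hi, h₀, h₁]
  exact le_iSup_of_le ⟨(1, p), hp_mono, hp_mem⟩ (by simp [p])

variable {d : X → X → ℝ} {γ : ℝ → X × ℝ} {a b u₀ u₁ L : ℝ}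

lemma chord_le_of_wLength_le (hL₀ : 0 ≤ L) (hL : wLength d γ a b ≤ ENNReal.ofReal L)
    (h₀ : u₀ ∈ Icc a b) (h₁ : u₁ ∈ Icc a b) (h₀₁ : u₀ ≤ u₁) :
    Real.sqrt ((Real.exp (-(⨆ s ∈ Icc u₀ u₁, (γ s).2)) * d (γ u₀).1 (γ u₁).1) ^ 2 +
      ((γ u₁).2 - (γ u₀).2) ^ 2) ≤ L :=
  (ENNReal.ofReal_le_ofReal_iff hL₀).mp ((ofReal_chord_le_wLength d γ h₀ h₁ h₀₁).trans hL)

lemma abs_snd_sub_le_of_wLength_le (hL₀ : 0 ≤ L) (hL : wLength d γ a b ≤ ENNReal.ofReal L)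
    (h₀ : u₀ ∈ Icc a b) (h₁ : u₁ ∈ Icc a b) (h₀₁ : u₀ ≤ u₁) :
    |(γ u₁).2 - (γ u₀).2| ≤ L :=
  (Real.abs_le_sqrt (le_add_of_nonneg_left (sq_nonneg _))).trans
    (chord_le_of_wLength_le hL₀ hL h₀ h₁ h₀₁)

lemma exp_neg_iSup_mul_le_of_wLength_le (hL₀ : 0 ≤ L) (hL : wLength d γ a b ≤ ENNReal.ofReal L)
    (h₀ : u₀ ∈ Icc a b) (h₁ : u₁ ∈ Icc a b) (h₀₁ : u₀ ≤ u₁) :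
    Real.exp (-(⨆ s ∈ Icc u₀ u₁, (γ s).2)) * d (γ u₀).1 (γ u₁).1 ≤ L :=
  (le_abs_self _).trans <| (Real.abs_le_sqrt (le_add_of_nonneg_right (sq_nonneg _))).trans
    (chord_le_of_wLength_le hL₀ hL h₀ h₁ h₀₁)

/-- The hypothesis `0 ≤ (γ a).2` is needed because of the junk value `0` that the inner
supremum over an empty index set contributes to the outer one. -/
lemma iSup_snd_le_of_wLength_le (hL₀ : 0 ≤ L) (hL : wLength d γ a b ≤ ENNReal.ofReal L)
    (ha : 0 ≤ (γ a).2) (hab : a ≤ b) :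
    ⨆ s ∈ Icc a b, (γ s).2 ≤ (γ a).2 + L := by
  have hbound : ∀ s ∈ Icc a b, (γ s).2 ≤ (γ a).2 + L := fun s hs =>
    by linarith [abs_le.mp (abs_snd_sub_le_of_wLength_le hL₀ hL ⟨le_rfl, hab⟩ hs hs.1)]
  exact Real.iSup_le (fun s => Real.iSup_le (hbound s) (by linarith)) (by linarith)

end WarpedLength

lemma dist_fst_le_of_wLength_le {X : Type*} [PseudoMetricSpace X] {γ : ℝ → X × ℝ} {a b L : ℝ}
    (hL₀ : 0 ≤ L) (hL : wLength dist γ a b ≤ ENNReal.ofReal L) (ha : 0 ≤ (γ a).2)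
    (hab : a ≤ b) :
    dist (γ a).1 (γ b).1 ≤ L * Real.exp ((γ a).2 + L) := by
  have ha_mem : a ∈ Icc a b := ⟨le_rfl, hab⟩
  have hb_mem : b ∈ Icc a b := ⟨hab, le_rfl⟩
  have hweight : Real.exp (-((γ a).2 + L)) ≤ Real.exp (-(⨆ s ∈ Icc a b, (γ s).2)) :=
    Real.exp_le_exp.mpr (neg_le_neg (iSup_snd_le_of_wLength_le hL₀ hL ha hab))
  have hscaled : Real.exp (-((γ a).2 + L)) * dist (γ a).1 (γ b).1 ≤ L :=
    (mul_le_mul_of_nonneg_right hweight dist_nonneg).trans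
      (exp_neg_iSup_mul_le_of_wLength_le hL₀ hL ha_mem hb_mem hab)
  rw [Real.exp_neg, inv_mul_le_iff₀ (Real.exp_pos _)] at hscaled
  linarith

lemma dist_le_and_abs_sub_le_of_wDist_le {X : Type*} [MetricSpace X] {lo r t s : ℝ} {x y : X}
    (hr : 0 ≤ r) (ht : 0 ≤ t) (h : wDist dist lo (x, t) (y, s) ≤ ENNReal.ofReal r) :
    dist x y ≤ r * Real.exp (t + r) ∧ |s - t| ≤ r := by
  have hcurve : ∀ L, r < L → dist x y ≤ L * Real.exp (t + L) ∧ |s - t| ≤ L := by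
    intro L hrL
    have hlt : wDist dist lo (x, t) (y, s) < ENNReal.ofReal L :=
      h.trans_lt ((ENNReal.ofReal_lt_ofReal_iff (hr.trans_lt hrL)).mpr hrL)
    simp only [wDist, iInf_lt_iff] at hlt
    obtain ⟨γ, -, hγ₀, hγ₁, -, hγL⟩ := hlt
    have hL₀ : 0 ≤ L := hr.trans hrL.le
    have hγ₀' : (γ 0).2 = t := by rw [hγ₀]
    constructor
    · simpa [hγ₀, hγ₁] using
        dist_fst_le_of_wLength_le hL₀ hγL.le (hγ₀' ▸ ht) zero_le_one
    · simpa [hγ₀, hγ₁] using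
        abs_snd_sub_le_of_wLength_le hL₀ hγL.le (by simp) (by simp) zero_le_one
  constructor
  · have hcont : Continuous fun L : ℝ => L * Real.exp (t + L) := by fun_prop
    exact ContinuousWithinAt.closure_le (f := fun _ => dist x y)
      (g := fun L => L * Real.exp (t + L)) (s := Ioi r) (by simp) continuousWithinAt_const
      hcont.continuousWithinAt fun L hL => (hcurve L hL).1
  · exact le_of_forall_gt_imp_ge_of_dense fun L hL => (hcurve L hL).2

theorem ball_in_warped_product_contained_general {X : Type*} [MetricSpace X]
    (r R t : ℝ) (hr : 0 < r) (hR : R = Real.exp (2 * r) * r)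
    (ht : r < t) (x y : X) (s : ℝ)
    (hmem : wDist dist 0 (x, t) (y, s) ≤ ENNReal.ofReal r) :
    Real.exp (-(t - r)) * dist x y ≤ R ∧ t - r ≤ s := by
  obtain ⟨hdist, hheight⟩ := dist_le_and_abs_sub_le_of_wDist_le hr.le (hr.trans ht).le hmem
  refine ⟨?_, by linarith [(abs_le.mp hheight).1]⟩
  calc Real.exp (-(t - r)) * dist x y
      ≤ Real.exp (-(t - r)) * (r * Real.exp (t + r)) :=
        mul_le_mul_of_nonneg_left hdist (Real.exp_pos _).le
    _ = R := by
        rw [hR, mul_left_comm, ← Real.exp_add]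
        ring_nf

/-- For `r > 0`, `R = e^{2r}·r`, `t > r`, the closed `r`-ball about
`(x,t)` in the warped product `W(X)` is contained in
`B_R(x; e^{-(t-r)}·d) × [t-r, ∞)`. -/
theorem ball_in_warped_product_contained {X : Type*} [MetricSpace X] [CompleteSpace X]
    (hX : IsLengthSpace X) (r R t : ℝ) (hr : 0 < r) (hR : R = Real.exp (2 * r) * r)
    (ht : r < t) (x y : X) (s : ℝ) (hs : 0 ≤ s)
    (hmem : wDist dist 0 (x, t) (y, s) ≤ ENNReal.ofReal r) :
    Real.exp (-(t - r)) * dist x y ≤ R ∧ t - r ≤ s :=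
  ball_in_warped_product_contained_general r R t hr hR ht x y s hmem
end

section
/- If X and X' are quasi-isometric proper length spaces, then their warped products W(X) and W(X') (over [0,∞) with warping function e^{-t}) are quasi-isometric. -/
open Set Metric ENNReal Filter

/- ===== auxiliary machinery ===== -/


/-- clamp to [0,1] -/
noncomputable def cl01 (r : ℝ) : ℝ := min (max r 0) 1

lemma cl01_mono : Monotone cl01 := fun a b hab => by
  unfold cl01; exact min_le_min (max_le_max hab le_rfl) le_rfl

lemma cl01_nonneg (r : ℝ) : 0 ≤ cl01 r := le_min (le_max_right _ _) zero_le_one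

lemma cl01_le_one (r : ℝ) : cl01 r ≤ 1 := min_le_right _ _

lemma cl01_of_nonpos {r : ℝ} (h : r ≤ 0) : cl01 r = 0 := by
  unfold cl01; rw [max_eq_right h]; exact min_eq_left zero_le_one

lemma cl01_of_one_le {r : ℝ} (h : 1 ≤ r) : cl01 r = 1 := by
  unfold cl01; exact min_eq_right (le_max_of_le_left h)

lemma cl01_lipschitz (a b : ℝ) : |cl01 a - cl01 b| ≤ |a - b| := by
  unfold cl01
  calc |min (max a 0) 1 - min (max b 0) 1| ≤ |max a 0 - max b 0| :=
        (abs_min_sub_min_le_max _ _ _ _).trans (by simp)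
    _ ≤ |a - b| := abs_max_sub_max_le_abs a b 0

lemma sqrt_le_abs_add_abs (A B : ℝ) : Real.sqrt (A^2 + B^2) ≤ |A| + |B| := by
  have : A^2 + B^2 ≤ (|A| + |B|)^2 := by
    have := abs_nonneg A; have := abs_nonneg B
    nlinarith [sq_abs A, sq_abs B, mul_nonneg (abs_nonneg A) (abs_nonneg B)]
  calc Real.sqrt (A^2 + B^2) ≤ Real.sqrt ((|A| + |B|)^2) := Real.sqrt_le_sqrt this
    _ = |A| + |B| := Real.sqrt_sq (by positivity)

lemma abs_le_sqrt_left (A B : ℝ) : |A| ≤ Real.sqrt (A^2 + B^2) := by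
  rw [← Real.sqrt_sq_eq_abs]
  exact Real.sqrt_le_sqrt (by nlinarith [sq_nonneg B])

lemma abs_le_sqrt_right (A B : ℝ) : |B| ≤ Real.sqrt (A^2 + B^2) := by
  rw [← Real.sqrt_sq_eq_abs]
  exact Real.sqrt_le_sqrt (by nlinarith [sq_nonneg A])

lemma two_mul_le_exp {x : ℝ} (hx : 0 ≤ x) : 2 * x ≤ Real.exp x := by
  have h1 := Real.add_one_le_exp (x/2)
  have h2 : Real.exp x = Real.exp (x/2) * Real.exp (x/2) := by
    rw [← Real.exp_add]; ring_nf
  have h3 : (x/2+1)*(x/2+1) ≤ Real.exp (x/2) * Real.exp (x/2) :=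
    mul_le_mul h1 h1 (by positivity) (Real.exp_pos _).le
  nlinarith [sq_nonneg (x/2 - 1)]

section VariationTools

variable {Y : Type*} [MetricSpace Y]

lemma evar_vanish_right {γ : ℝ → Y} {A B : ℝ} (hγ : ContinuousOn γ (Icc A B))
    (hfin : eVariationOn γ (Icc A B) ≠ ⊤) {t : ℝ} (ht : t ∈ Ico A B) {ε : ℝ} (hε : 0 < ε) :
    ∃ q ∈ Ioc t B, eVariationOn γ (Icc t q) ≤ ENNReal.ofReal ε := by
  classical
  -- uniform continuity parameter
  have hUC : UniformContinuousOn γ (Icc A B) :=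
    isCompact_Icc.uniformContinuousOn_of_continuous hγ
  rw [Metric.uniformContinuousOn_iff] at hUC
  obtain ⟨δ, hδ, hδ'⟩ := hUC (ε/4) (by linarith)
  set r : ℝ := min (t + δ/2) B with hr
  have htr : t < r := lt_min (by linarith) ht.2
  have hrB : r ≤ B := min_le_right _ _
  have hsub : Icc t r ⊆ Icc A B := Icc_subset_Icc ht.1 hrB
  have hnear : ∀ a b : ℝ, a ∈ Icc t r → b ∈ Icc t r →
      edist (γ a) (γ b) ≤ ENNReal.ofReal (ε/4) := by
    intro a b ha hb
    have hd : dist a b < δ := by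
      rw [Real.dist_eq, abs_lt]
      have h1 := ha.1; have h2 := ha.2; have h3 := hb.1; have h4 := hb.2
      have : r ≤ t + δ/2 := min_le_left _ _
      constructor <;> nlinarith
    have := hδ' a (hsub ha) b (hsub hb) hd
    rw [edist_dist]
    exact ENNReal.ofReal_le_ofReal this.le
  set E := eVariationOn γ (Icc t r) with hE
  have hEfin : E ≠ ⊤ := fun h => hfin (top_le_iff.mp (h ▸ eVariationOn.mono γ hsub))
  by_cases hEsmall : E ≤ ENNReal.ofReal ε
  · exact ⟨r, ⟨htr, hrB⟩, hEsmall⟩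
  push_neg at hEsmall
  have hEpos : E ≠ 0 := by
    intro h; rw [h] at hEsmall; exact (not_lt.mpr zero_le) hEsmall
  have hlt : E - ENNReal.ofReal (ε/4) < E :=
    ENNReal.sub_lt_self hEfin hEpos (by simp [hε, ne_of_gt, (by linarith : (0:ℝ) < ε/4)])
  rw [hE] at hlt
  conv_rhs at hlt => rw [eVariationOn]
  rw [lt_iSup_iff] at hlt
  obtain ⟨⟨n, u, hu, us⟩, hsum⟩ := hlt
  dsimp only at hsum
  -- find the first index where u goes above t
  by_cases hall : ∀ i, i ≤ n → u i ≤ t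
  · -- all partition points equal t, sum is zero, contradiction-ish: E small
    exfalso
    have : ∀ i < n, edist (γ (u (i+1))) (γ (u i)) = 0 := by
      intro i hi
      have h1 : u i = t := le_antisymm (hall i hi.le) (us i).1
      have h2 : u (i+1) = t := le_antisymm (hall (i+1) hi) (us (i+1)).1
      rw [h1, h2, edist_self]
    have hz : ∑ i ∈ Finset.range n, edist (γ (u (i + 1))) (γ (u i)) = 0 :=
      Finset.sum_eq_zero (fun i hi => this i (Finset.mem_range.mp hi))
    rw [hz] at hsum
    exact (not_lt.mpr zero_le) hsum
  push_neg at hall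
  have hex : ∃ i, i ≤ n ∧ t < u i := by
    obtain ⟨i, hi1, hi2⟩ := hall; exact ⟨i, hi1, hi2⟩
  set m := Nat.find hex with hm
  obtain ⟨hmn, hmt⟩ : m ≤ n ∧ t < u m := Nat.find_spec hex
  have hbelow : ∀ j, j < m → u j = t := by
    intro j hj
    have := Nat.find_min hex hj
    push_neg at this
    exact le_antisymm (not_lt.mp (fun h => (Nat.find_min hex hj) ⟨hj.le.trans hmn, h⟩))
      (us j).1
  clear_value m
  -- split the sum
  have hsplit : ∑ i ∈ Finset.range n, edist (γ (u (i + 1))) (γ (u i)) ≤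
      ENNReal.ofReal (ε/4) + eVariationOn γ (Icc (u m) r) := by
    have h1 : ∑ i ∈ Finset.range m, edist (γ (u (i + 1))) (γ (u i)) ≤ ENNReal.ofReal (ε/4) := by
      rcases Nat.eq_zero_or_pos m with h0 | h0
      · simp [h0]
      · obtain ⟨m', rfl⟩ := Nat.exists_eq_succ_of_ne_zero h0.ne'
        rw [Finset.sum_range_succ]
        have hzz : ∑ i ∈ Finset.range m', edist (γ (u (i + 1))) (γ (u i)) = 0 := by
          refine Finset.sum_eq_zero (fun i hi => ?_)
          rw [Finset.mem_range] at hi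
          rw [hbelow i (hi.trans (Nat.lt_succ_self m')), hbelow (i+1) (Nat.succ_lt_succ hi),
            edist_self]
        rw [hzz, zero_add, hbelow m' (Nat.lt_succ_self m')]
        exact hnear _ _ (us _) ⟨le_rfl, htr.le⟩
    have h2 : ∑ i ∈ Finset.Ico m n, edist (γ (u (i + 1))) (γ (u i)) ≤
        eVariationOn γ (Icc (u m) r) := by
      rw [Finset.sum_Ico_eq_sum_range]
      have hmono : Monotone (fun j => u (m + j)) := fun a b hab => hu (by omega)
      have hmem : ∀ j, (fun j => u (m + j)) j ∈ Icc (u m) r :=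
        fun j => ⟨hu (Nat.le_add_right _ _), (us _).2⟩
      exact eVariationOn.sum_le (f := γ) (n := n - m) hmono hmem
    calc ∑ i ∈ Finset.range n, edist (γ (u (i + 1))) (γ (u i))
        = ∑ i ∈ Finset.Ico 0 m, edist (γ (u (i + 1))) (γ (u i)) +
          ∑ i ∈ Finset.Ico m n, edist (γ (u (i + 1))) (γ (u i)) := by
          rw [Finset.sum_Ico_consecutive _ (Nat.zero_le m) hmn, Finset.range_eq_Ico]
      _ ≤ ENNReal.ofReal (ε/4) + eVariationOn γ (Icc (u m) r) := by
          rw [← Finset.range_eq_Ico] at *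
          exact add_le_add h1 h2
  -- additivity
  have humem : u m ∈ Icc t r := us m
  have hadd : eVariationOn γ (Icc t (u m)) + eVariationOn γ (Icc (u m) r) =
      eVariationOn γ (Icc t r) := by
    have := eVariationOn.Icc_add_Icc γ (s := Icc t r) humem.1 humem.2 humem
    simpa [inter_eq_self_of_subset_right (Icc_subset_Icc_right humem.2),
      inter_eq_self_of_subset_right (Icc_subset_Icc_left humem.1),
      inter_self] using this
  have hD : eVariationOn γ (Icc (u m) r) ≠ ⊤ := by
    intro h
    apply hEfin
    rw [hE, ← hadd, h, add_top]
  have key : eVariationOn γ (Icc t (u m)) ≤ ENNReal.ofReal (ε/2) := by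
    have h1 : E ≤ ENNReal.ofReal (ε/4) + (ENNReal.ofReal (ε/4) +
        eVariationOn γ (Icc (u m) r)) := by
      have := hsum.le.trans hsplit
      calc E ≤ E - ENNReal.ofReal (ε/4) + ENNReal.ofReal (ε/4) := le_tsub_add
        _ ≤ (ENNReal.ofReal (ε/4) + eVariationOn γ (Icc (u m) r)) + ENNReal.ofReal (ε/4) :=
          add_le_add this le_rfl
        _ = ENNReal.ofReal (ε/4) + (ENNReal.ofReal (ε/4) + eVariationOn γ (Icc (u m) r)) := by
          ring
    have h2 : eVariationOn γ (Icc t (u m)) + eVariationOn γ (Icc (u m) r) ≤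
        ENNReal.ofReal (ε/2) + eVariationOn γ (Icc (u m) r) := by
      rw [hadd, ← hE]
      calc E ≤ ENNReal.ofReal (ε/4) + (ENNReal.ofReal (ε/4) +
            eVariationOn γ (Icc (u m) r)) := h1
        _ = (ENNReal.ofReal (ε/4) + ENNReal.ofReal (ε/4)) + eVariationOn γ (Icc (u m) r) := by
          ring
        _ = ENNReal.ofReal (ε/2) + eVariationOn γ (Icc (u m) r) := by
          rw [← ENNReal.ofReal_add (by linarith) (by linarith)]
          congr 1; ring
    exact (ENNReal.add_le_add_iff_right hD).mp h2
  exact ⟨u m, ⟨hmt, humem.2.trans hrB⟩,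
    key.trans (ENNReal.ofReal_le_ofReal (by linarith))⟩

lemma evar_vanish_left {γ : ℝ → Y} {A B : ℝ} (hγ : ContinuousOn γ (Icc A B))
    (hfin : eVariationOn γ (Icc A B) ≠ ⊤) {t : ℝ} (ht : t ∈ Ioc A B) {ε : ℝ} (hε : 0 < ε) :
    ∃ q ∈ Ico A t, eVariationOn γ (Icc q t) ≤ ENNReal.ofReal ε := by
  set φ : ℝ → ℝ := fun s => A + B - s with hφ
  have hanti : ∀ s : Set ℝ, AntitoneOn φ s := fun s a _ b _ hab => by simp [hφ]; linarith
  have himg : ∀ a b : ℝ, φ '' Icc a b = Icc (A + B - b) (A + B - a) := by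
    intro a b
    have : φ = fun x => (A + B) - x := rfl
    rw [this, Set.image_const_sub_Icc]
  have hcomp : ∀ a b : ℝ, eVariationOn (γ ∘ φ) (Icc a b) =
      eVariationOn γ (Icc (A + B - b) (A + B - a)) := by
    intro a b
    rw [eVariationOn.comp_eq_of_antitoneOn γ φ (hanti _), himg]
  have hγ' : ContinuousOn (γ ∘ φ) (Icc A B) := by
    apply hγ.comp
    · exact (continuous_const.sub continuous_id).continuousOn
    · intro x hx
      constructor <;> simp only [hφ] <;> [linarith [hx.2]; linarith [hx.1]]
  have hfin' : eVariationOn (γ ∘ φ) (Icc A B) ≠ ⊤ := by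
    rw [hcomp]
    intro h; apply hfin
    rw [show A + B - B = A by ring, show A + B - A = B by ring] at h
    exact h
  have ht' : A + B - t ∈ Ico A B := ⟨by linarith [ht.2], by linarith [ht.1]⟩
  obtain ⟨q', hq', hsmall⟩ := evar_vanish_right hγ' hfin' ht' hε
  refine ⟨A + B - q', ⟨by linarith [hq'.2], by linarith [hq'.1]⟩, ?_⟩
  rw [hcomp] at hsmall
  rw [show A + B - (A + B - t) = t by ring] at hsmall
  exact hsmall

/-- Lipschitz-reparametrized near-geodesic in a length space. -/
lemma exists_lipschitz_path (hY : IsLengthSpace Y)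
    (x y : Y) {ε : ℝ} (hε : 0 < ε) :
    ∃ g : ℝ → Y, g 0 = x ∧ g 1 = y ∧
      ∀ a b : ℝ, a ≤ b → dist (g a) (g b) ≤ (dist x y + ε) * (cl01 b - cl01 a) := by
  -- extract a near-optimal continuous curve
  have hlt : (⨅ (γ : ℝ → Y) (_ : ContinuousOn γ (Set.Icc 0 1)) (_ : γ 0 = x) (_ : γ 1 = y),
      eVariationOn γ (Set.Icc 0 1)) < edist x y + ENNReal.ofReal ε := by
    rw [← hY x y]
    exact ENNReal.lt_add_right (edist_ne_top x y) (by simp [hε, ne_of_gt hε])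
  rw [iInf_lt_iff] at hlt; obtain ⟨γ, hlt⟩ := hlt
  rw [iInf_lt_iff] at hlt; obtain ⟨hcont, hlt⟩ := hlt
  rw [iInf_lt_iff] at hlt; obtain ⟨hγ0, hlt⟩ := hlt
  rw [iInf_lt_iff] at hlt; obtain ⟨hγ1, hlt⟩ := hlt
  have hfin : eVariationOn γ (Icc 0 1) ≠ ⊤ :=
    (hlt.trans_le le_top).ne
  -- the cumulative-variation function
  set v : ℝ → ℝ := fun t => (eVariationOn γ (Icc 0 t)).toReal with hv
  have hVt : ∀ t ∈ Icc (0:ℝ) 1, eVariationOn γ (Icc 0 t) ≠ ⊤ := by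
    intro t htm
    exact fun h => hfin (top_le_iff.mp (h ▸ eVariationOn.mono γ (Icc_subset_Icc le_rfl htm.2)))
  have hVadd : ∀ a b : ℝ, 0 ≤ a → a ≤ b → b ≤ 1 →
      eVariationOn γ (Icc 0 a) + eVariationOn γ (Icc a b) = eVariationOn γ (Icc 0 b) := by
    intro a b h0 hab hb1
    have := eVariationOn.Icc_add_Icc γ (s := Icc 0 b) h0 hab ⟨h0, hab⟩
    simpa [inter_eq_self_of_subset_right (Icc_subset_Icc_right hab),
      inter_eq_self_of_subset_right (Icc_subset_Icc_left h0), inter_self] using this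
  have hvmono : ∀ a b : ℝ, 0 ≤ a → a ≤ b → b ≤ 1 → v a ≤ v b := by
    intro a b h0 hab hb1
    apply ENNReal.toReal_mono (hVt b ⟨h0.trans hab, hb1⟩)
    exact eVariationOn.mono γ (Icc_subset_Icc le_rfl hab)
  have hvdiff : ∀ a b : ℝ, 0 ≤ a → a ≤ b → b ≤ 1 →
      v b - v a = (eVariationOn γ (Icc a b)).toReal := by
    intro a b h0 hab hb1
    have hfab : eVariationOn γ (Icc a b) ≠ ⊤ :=
      fun h => hfin (top_le_iff.mp (h ▸ eVariationOn.mono γ (Icc_subset_Icc h0 hb1)))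
    rw [hv]
    dsimp only
    rw [← hVadd a b h0 hab hb1, ENNReal.toReal_add (hVt a ⟨h0, hab.trans hb1⟩) hfab]
    ring
  have hdist_le : ∀ a b : ℝ, 0 ≤ a → a ≤ b → b ≤ 1 → dist (γ a) (γ b) ≤ v b - v a := by
    intro a b h0 hab hb1
    rw [hvdiff a b h0 hab hb1]
    have h1 : edist (γ a) (γ b) ≤ eVariationOn γ (Icc a b) :=
      eVariationOn.edist_le γ ⟨le_rfl, hab⟩ ⟨hab, le_rfl⟩
    have hfab : eVariationOn γ (Icc a b) ≠ ⊤ :=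
      fun h => hfin (top_le_iff.mp (h ▸ eVariationOn.mono γ (Icc_subset_Icc h0 hb1)))
    rw [dist_edist]
    exact ENNReal.toReal_mono hfab h1
  have hv0 : v 0 = 0 := by
    rw [hv]; dsimp only
    rw [eVariationOn.subsingleton γ (by rw [Set.Icc_self]; exact Set.subsingleton_singleton)]
    simp
  have hv1le : v 1 ≤ dist x y + ε := by
    rw [hv]; dsimp only
    rw [dist_edist]
    calc (eVariationOn γ (Icc 0 1)).toReal ≤ (edist x y + ENNReal.ofReal ε).toReal :=
        ENNReal.toReal_mono (by simp [edist_ne_top, ENNReal.ofReal_ne_top]) hlt.le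
      _ = (edist x y).toReal + ε := by
        rw [ENNReal.toReal_add (edist_ne_top x y) ENNReal.ofReal_ne_top,
          ENNReal.toReal_ofReal hε.le]
  -- intermediate value property for v
  have hIVT : ∀ c : ℝ, 0 ≤ c → c ≤ v 1 → ∃ t ∈ Icc (0:ℝ) 1, v t = c := by
    intro c hc0 hc1
    set S : Set ℝ := {t ∈ Icc (0:ℝ) 1 | c ≤ v t} with hS
    have hne : S.Nonempty := ⟨1, ⟨zero_le_one, le_rfl⟩, hc1⟩
    have hbdd : BddBelow S := ⟨0, fun s hs => hs.1.1⟩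
    set t₀ := sInf S with ht₀
    have ht₀mem : t₀ ∈ Icc (0:ℝ) 1 :=
      ⟨le_csInf hne (fun s hs => hs.1.1), (csInf_le hbdd ⟨⟨zero_le_one, le_rfl⟩, hc1⟩)⟩
    refine ⟨t₀, ht₀mem, le_antisymm ?_ ?_⟩
    · -- v t₀ ≤ c
      rcases eq_or_lt_of_le ht₀mem.1 with h0 | h0
      · rw [← h0, hv0]; exact hc0
      · -- t₀ > 0 : approach from the left
        by_contra hgt
        push_neg at hgt
        obtain ⟨q, hq, hsmall⟩ := evar_vanish_left hcont hfin (t := t₀) ⟨h0, ht₀mem.2⟩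
          (ε := (v t₀ - c)/2) (by linarith)
        have hqS : q ∉ S := fun hqS => (not_lt.mpr (csInf_le hbdd hqS)) hq.2
        have hq01 : q ∈ Icc (0:ℝ) 1 := ⟨hq.1, hq.2.le.trans ht₀mem.2⟩
        have hvq : v q < c := by
          by_contra h; push_neg at h; exact hqS ⟨hq01, h⟩
        have : v t₀ - v q ≤ (v t₀ - c)/2 := by
          rw [hvdiff q t₀ hq.1 hq.2.le ht₀mem.2]
          have := ENNReal.toReal_mono ENNReal.ofReal_ne_top hsmall
          rwa [ENNReal.toReal_ofReal (by linarith)] at this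
        linarith
    · -- c ≤ v t₀
      rcases eq_or_lt_of_le ht₀mem.2 with h1 | h1
      · -- t₀ = 1
        by_contra hgt
        push_neg at hgt
        -- every point of S is ≥ t₀ = 1 and ≤ 1 so 1 ∈ S
        have : (1:ℝ) ∈ S := by
          obtain ⟨s, hs⟩ := hne
          have hle : t₀ ≤ s := csInf_le hbdd hs
          have hs1 : s = 1 := le_antisymm hs.1.2 (by rw [h1] at hle; exact hle)
          exact hs1 ▸ hs
        rw [← h1] at this
        exact (not_lt.mpr this.2) hgt
      · by_contra hgt
        push_neg at hgt
        obtain ⟨q, hq, hsmall⟩ := evar_vanish_right hcont hfin (t := t₀) ⟨ht₀mem.1, h1⟩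
          (ε := (c - v t₀)/2) (by linarith)
        obtain ⟨s, hsS, hsq⟩ := (csInf_lt_iff hbdd hne).mp (hq.1.trans_le le_rfl : sInf S < q)
        have hst : t₀ ≤ s := csInf_le hbdd hsS
        have : v s - v t₀ ≤ (c - v t₀)/2 := by
          rw [hvdiff t₀ s ht₀mem.1 hst hsS.1.2]
          have h2 : eVariationOn γ (Icc t₀ s) ≤ ENNReal.ofReal ((c - v t₀)/2) :=
            le_trans (eVariationOn.mono γ (Icc_subset_Icc le_rfl hsq.le)) hsmall
          have := ENNReal.toReal_mono ENNReal.ofReal_ne_top h2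
          rwa [ENNReal.toReal_ofReal (by linarith)] at this
        have := hsS.2
        linarith
  -- choose parametrization
  choose τ hτ using fun c (h : c ∈ Icc (0:ℝ) (v 1)) => hIVT c h.1 h.2
  have hv1nn : 0 ≤ v 1 := ENNReal.toReal_nonneg
  set T : ℝ → ℝ := fun σ => τ (cl01 σ * v 1)
    ⟨mul_nonneg (cl01_nonneg σ) hv1nn, mul_le_of_le_one_left hv1nn (cl01_le_one σ)⟩ with hT
  have hTmem : ∀ σ, T σ ∈ Icc (0:ℝ) 1 := fun σ => (hτ _ _).1
  have hTval : ∀ σ, v (T σ) = cl01 σ * v 1 := fun σ => (hτ _ _).2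
  refine ⟨fun σ => γ (T σ), ?_, ?_, ?_⟩
  · -- g 0 = x
    have h0 : v (T 0) = 0 := by rw [hTval]; simp [cl01_of_nonpos le_rfl]
    have : dist (γ 0) (γ (T 0)) ≤ v (T 0) - v 0 :=
      hdist_le 0 (T 0) le_rfl (hTmem 0).1 (hTmem 0).2
    rw [h0, hv0, sub_zero] at this
    have := le_antisymm this dist_nonneg
    rw [← hγ0]
    exact (dist_eq_zero.mp this.symm.symm).symm
  · -- g 1 = y
    have h1 : v (T 1) = v 1 := by rw [hTval]; simp [cl01_of_one_le le_rfl]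
    have : dist (γ (T 1)) (γ 1) ≤ v 1 - v (T 1) :=
      hdist_le (T 1) 1 (hTmem 1).1 (hTmem 1).2 le_rfl
    rw [h1, sub_self] at this
    have := le_antisymm this dist_nonneg
    rw [← hγ1]
    exact dist_eq_zero.mp this
  · -- Lipschitz-type bound
    intro a b hab
    have hcl : cl01 a ≤ cl01 b := cl01_mono hab
    rcases le_total (T a) (T b) with hT' | hT'
    · calc dist (γ (T a)) (γ (T b)) ≤ v (T b) - v (T a) :=
          hdist_le _ _ (hTmem a).1 hT' (hTmem b).2
        _ = (cl01 b - cl01 a) * v 1 := by rw [hTval, hTval]; ring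
        _ ≤ (dist x y + ε) * (cl01 b - cl01 a) := by
          rw [mul_comm]
          exact mul_le_mul_of_nonneg_right hv1le (sub_nonneg.mpr hcl)
    · rw [dist_comm]
      calc dist (γ (T b)) (γ (T a)) ≤ v (T a) - v (T b) :=
          hdist_le _ _ (hTmem b).1 hT' (hTmem a).2
        _ = (cl01 a - cl01 b) * v 1 := by rw [hTval, hTval]; ring
        _ ≤ (cl01 b - cl01 a) * v 1 := by
          apply mul_le_mul_of_nonneg_right _ hv1nn
          linarith
        _ ≤ (dist x y + ε) * (cl01 b - cl01 a) := by
          rw [mul_comm]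
          exact mul_le_mul_of_nonneg_right hv1le (sub_nonneg.mpr hcl)


end VariationTools

/-- comparison function -/
noncomputable def phiW {Y : Type*} [MetricSpace Y] (p q : Y × ℝ) : ℝ :=
  |p.2 - q.2| + 2 * max 0 (Real.log (dist p.1 q.1 * Real.exp (-(max p.2 q.2))))

lemma phiW_nonneg {Y : Type*} [MetricSpace Y] (p q : Y × ℝ) : 0 ≤ phiW p q := by
  unfold phiW
  have := abs_nonneg (p.2 - q.2)
  have := le_max_left (0:ℝ) (Real.log (dist p.1 q.1 * Real.exp (-(max p.2 q.2))))
  linarith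

section Upper

variable {Y : Type*} [MetricSpace Y]

lemma wLength_le_bound (γ : ℝ → Y × ℝ) (μ ν : ℝ → ℝ)
    (h : ∀ a b : ℝ, a ∈ Icc (0:ℝ) 1 → b ∈ Icc (0:ℝ) 1 → a ≤ b →
      Real.exp (-(⨆ s ∈ Icc a b, (γ s).2)) * dist (γ a).1 (γ b).1 ≤ μ b - μ a ∧
      |(γ b).2 - (γ a).2| ≤ ν b - ν a) :
    wLength dist γ 0 1 ≤ ENNReal.ofReal ((μ 1 - μ 0) + (ν 1 - ν 0)) := by
  rw [wLength]
  apply iSup_le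
  rintro ⟨⟨n, u⟩, hu, us⟩
  dsimp only
  set B : ℕ → ℝ := fun i => (μ (u (i+1)) - μ (u i)) + (ν (u (i+1)) - ν (u i)) with hB
  have hkey : ∀ i, Real.sqrt
      ((Real.exp (-(⨆ s ∈ Set.Icc (u i) (u (i + 1)), (γ s).2)) *
        dist (γ (u i)).1 (γ (u (i + 1))).1) ^ 2 +
        ((γ (u (i + 1))).2 - (γ (u i)).2) ^ 2) ≤ B i := by
    intro i
    obtain ⟨h1, h2⟩ := h (u i) (u (i+1)) (us i) (us (i+1)) (hu (Nat.le_succ i))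
    have hA : 0 ≤ Real.exp (-(⨆ s ∈ Set.Icc (u i) (u (i + 1)), (γ s).2)) *
        dist (γ (u i)).1 (γ (u (i + 1))).1 :=
      mul_nonneg (Real.exp_nonneg _) dist_nonneg
    calc Real.sqrt _ ≤ |Real.exp (-(⨆ s ∈ Set.Icc (u i) (u (i + 1)), (γ s).2)) *
          dist (γ (u i)).1 (γ (u (i + 1))).1| + |(γ (u (i + 1))).2 - (γ (u i)).2| :=
        sqrt_le_abs_add_abs _ _
      _ ≤ B i := by rw [abs_of_nonneg hA]; exact add_le_add h1 h2
  have hBnn : ∀ i ∈ Finset.range n, 0 ≤ B i := by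
    intro i _
    exact le_trans (Real.sqrt_nonneg _) (hkey i)
  calc ∑ i ∈ Finset.range n, ENNReal.ofReal (Real.sqrt _) ≤
      ∑ i ∈ Finset.range n, ENNReal.ofReal (B i) :=
        Finset.sum_le_sum (fun i _ => ENNReal.ofReal_le_ofReal (hkey i))
    _ = ENNReal.ofReal (∑ i ∈ Finset.range n, B i) :=
        (ENNReal.ofReal_sum_of_nonneg hBnn).symm
    _ ≤ ENNReal.ofReal ((μ 1 - μ 0) + (ν 1 - ν 0)) := by
      apply ENNReal.ofReal_le_ofReal
      have htel : ∑ i ∈ Finset.range n, B i =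
          (μ (u n) - μ (u 0)) + (ν (u n) - ν (u 0)) := by
        rw [hB]
        rw [Finset.sum_add_distrib, Finset.sum_range_sub (fun i => μ (u i)),
          Finset.sum_range_sub (fun i => ν (u i))]
      rw [htel]
      -- endpoints
      have e1 := h (u n) 1 (us n) (right_mem_Icc.mpr zero_le_one) (us n).2
      have e2 := h 0 (u 0) (left_mem_Icc.mpr zero_le_one) (us 0) (us 0).1
      have f1 : μ (u n) ≤ μ 1 := by
        have := e1.1
        have hA : 0 ≤ Real.exp (-(⨆ s ∈ Set.Icc (u n) 1, (γ s).2)) *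
            dist (γ (u n)).1 (γ 1).1 := mul_nonneg (Real.exp_nonneg _) dist_nonneg
        linarith
      have f2 : μ 0 ≤ μ (u 0) := by
        have := e2.1
        have hA : 0 ≤ Real.exp (-(⨆ s ∈ Set.Icc 0 (u 0), (γ s).2)) *
            dist (γ 0).1 (γ (u 0)).1 := mul_nonneg (Real.exp_nonneg _) dist_nonneg
        linarith
      have f3 : ν (u n) ≤ ν 1 := by have := e1.2; have := abs_nonneg ((γ 1).2 - (γ (u n)).2); linarith
      have f4 : ν 0 ≤ ν (u 0) := by have := e2.2; have := abs_nonneg ((γ (u 0)).2 - (γ 0).2); linarith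
      linarith

lemma wDist_le_phi (hY : IsLengthSpace Y) (p q : Y × ℝ) (hp : 0 ≤ p.2) (hq : 0 ≤ q.2) :
    wDist dist 0 p q ≤ ENNReal.ofReal (phiW p q + 2) := by
  obtain ⟨x, s⟩ := p
  obtain ⟨y, t⟩ := q
  simp only at hp hq
  set u := dist x y with hu
  set T := max s t with hT
  set lam := max 0 (Real.log (u * Real.exp (-T))) with hlam
  set H := T + lam with hH
  have hu0 : 0 ≤ u := dist_nonneg
  have hlam0 : 0 ≤ lam := le_max_left _ _
  have hT0 : 0 ≤ T := le_trans hp (le_max_left _ _)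
  have hH0 : 0 ≤ H := by positivity
  have hsH : s ≤ H := le_trans (le_max_left s t) (by linarith)
  have htH : t ≤ H := le_trans (le_max_right s t) (by linarith)
  obtain ⟨g, hg0, hg1, hgL⟩ := exists_lipschitz_path hY x y one_pos
  set L := u + 1 with hL
  have hL0 : 0 < L := by positivity
  set c1 : ℝ → ℝ := fun σ => cl01 (3*σ) with hc1
  set c2 : ℝ → ℝ := fun σ => cl01 (3*σ - 2) with hc2
  set c3 : ℝ → ℝ := fun σ => cl01 (3*σ - 1) with hc3
  set hgt : ℝ → ℝ := fun σ => s + (H - s) * c1 σ - (H - t) * c2 σ with hhgt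
  set γ : ℝ → Y × ℝ := fun σ => (g (3*σ - 1), hgt σ) with hγ
  have hc21 : ∀ σ, c2 σ ≤ c1 σ := fun σ => cl01_mono (by linarith)
  have hhle : ∀ σ, hgt σ ≤ H := by
    intro σ
    have h1 : (H - s) * c1 σ ≤ (H - s) * 1 :=
      mul_le_mul_of_nonneg_left (cl01_le_one _) (by linarith)
    have h2 : 0 ≤ (H - t) * c2 σ := mul_nonneg (by linarith) (cl01_nonneg _)
    simp only [hhgt]; nlinarith
  have hhge : ∀ σ, min s t ≤ hgt σ := by
    intro σ
    have h1 : (H - s) * c2 σ ≤ (H - s) * c1 σ :=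
      mul_le_mul_of_nonneg_left (hc21 σ) (by linarith)
    have h2 : hgt σ ≥ s + (t - s) * c2 σ := by simp only [hhgt]; nlinarith
    rcases le_total s t with hst | hst
    · have : s + (t - s) * c2 σ ≥ s := by nlinarith [cl01_nonneg (3*σ-2)]
      calc min s t ≤ s := min_le_left _ _
        _ ≤ s + (t-s) * c2 σ := this
        _ ≤ hgt σ := h2
    · have : s + (t - s) * c2 σ ≥ t := by nlinarith [cl01_le_one (3*σ-2)]
      calc min s t ≤ t := min_le_right _ _
        _ ≤ s + (t-s) * c2 σ := this
        _ ≤ hgt σ := h2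
  have hh0 : ∀ σ, 0 ≤ hgt σ := fun σ => le_trans (le_min hp hq) (hhge σ)
  -- endpoints
  have hgm1 : g (-1) = x := by
    have := hgL (-1) 0 (by norm_num)
    rw [cl01_of_nonpos le_rfl, cl01_of_nonpos (by norm_num)] at this
    simp only [sub_zero, sub_self, mul_zero] at this
    rw [← hg0]
    exact dist_le_zero.mp (by linarith)
  have hg2 : g 2 = y := by
    have := hgL 1 2 (by norm_num)
    rw [cl01_of_one_le le_rfl, cl01_of_one_le (by norm_num)] at this
    simp only [sub_self, mul_zero] at this
    rw [← hg1]
    rw [dist_comm] at this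
    exact dist_le_zero.mp (by linarith)
  have hγ0 : γ 0 = (x, s) := by
    have e1 : c1 0 = 0 := by
      simp only [hc1]; exact cl01_of_nonpos (by norm_num)
    have e2 : c2 0 = 0 := by
      simp only [hc2]; exact cl01_of_nonpos (by norm_num)
    have e3 : g (3*(0:ℝ) - 1) = x := by rw [show (3:ℝ)*0-1 = -1 by ring]; exact hgm1
    simp only [hγ, hhgt, e1, e2, e3]
    rw [Prod.mk.injEq]
    exact ⟨rfl, by ring⟩
  have hγ1 : γ 1 = (y, t) := by
    have e1 : c1 1 = 1 := by
      simp only [hc1]; exact cl01_of_one_le (by norm_num)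
    have e2 : c2 1 = 1 := by
      simp only [hc2]; exact cl01_of_one_le (by norm_num)
    have e3 : g (3*(1:ℝ) - 1) = y := by rw [show (3:ℝ)*1-1 = 2 by ring]; exact hg2
    simp only [hγ, hhgt, e1, e2, e3]
    rw [Prod.mk.injEq]
    exact ⟨rfl, by ring⟩
  -- Lipschitz
  have hgdist : ∀ a b : ℝ, a ≤ b → dist (g (3*a-1)) (g (3*b-1)) ≤ L * (c3 b - c3 a) :=
    fun a b hab => hgL (3*a-1) (3*b-1) (by linarith)
  have hLip : ∃ K : NNReal, LipschitzWith K γ := by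
    refine ⟨Real.toNNReal (3*L) ⊔ Real.toNNReal (3*((H-s)+(H-t))), ?_⟩
    have lip1 : LipschitzWith (Real.toNNReal (3*L)) (fun σ => g (3*σ - 1)) := by
      apply LipschitzWith.of_dist_le_mul
      intro a b
      rw [Real.coe_toNNReal _ (by positivity)]
      rcases le_total a b with hab | hab
      · calc dist (g (3*a-1)) (g (3*b-1)) ≤ L * (c3 b - c3 a) := hgdist a b hab
          _ ≤ L * (3 * |b - a|) := by
            apply mul_le_mul_of_nonneg_left _ hL0.le
            have := cl01_lipschitz (3*b-1) (3*a-1)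
            have h2 : |3*b-1 - (3*a-1)| = 3*|b-a| := by
              rw [show 3*b-1 - (3*a-1) = 3*(b-a) by ring, abs_mul]
              norm_num
            calc c3 b - c3 a ≤ |c3 b - c3 a| := le_abs_self _
              _ ≤ 3*|b-a| := by rw [← h2]; exact this
          _ = 3 * L * dist a b := by rw [Real.dist_eq, abs_sub_comm]; ring
      · rw [dist_comm]
        calc dist (g (3*b-1)) (g (3*a-1)) ≤ L * (c3 a - c3 b) := hgdist b a hab
          _ ≤ L * (3 * |a - b|) := by
            apply mul_le_mul_of_nonneg_left _ hL0.le
            have := cl01_lipschitz (3*a-1) (3*b-1)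
            have h2 : |3*a-1 - (3*b-1)| = 3*|a-b| := by
              rw [show 3*a-1 - (3*b-1) = 3*(a-b) by ring, abs_mul]
              norm_num
            calc c3 a - c3 b ≤ |c3 a - c3 b| := le_abs_self _
              _ ≤ 3*|a-b| := by rw [← h2]; exact this
          _ = 3 * L * dist a b := by rw [Real.dist_eq]; ring
    have lip2 : LipschitzWith (Real.toNNReal (3*((H-s)+(H-t)))) hgt := by
      apply LipschitzWith.of_dist_le_mul
      intro a b
      rw [Real.coe_toNNReal _ (by nlinarith), Real.dist_eq, Real.dist_eq]
      have e1 := cl01_lipschitz (3*a) (3*b)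
      have e2 := cl01_lipschitz (3*a-2) (3*b-2)
      have h3 : |3*a - 3*b| = 3*|a-b| := by
        rw [show 3*a - 3*b = 3*(a-b) by ring, abs_mul]; norm_num
      have h4 : |3*a-2 - (3*b-2)| = 3*|a-b| := by
        rw [show 3*a-2 - (3*b-2) = 3*(a-b) by ring, abs_mul]; norm_num
      rw [h3] at e1
      rw [h4] at e2
      simp only [hhgt]
      have expand : s + (H - s) * c1 a - (H - t) * c2 a - (s + (H - s) * c1 b - (H - t) * c2 b)
          = (H - s) * (c1 a - c1 b) - (H - t) * (c2 a - c2 b) := by ring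
      rw [expand]
      calc |(H - s) * (c1 a - c1 b) - (H - t) * (c2 a - c2 b)|
          ≤ |(H - s) * (c1 a - c1 b)| + |(H - t) * (c2 a - c2 b)| := abs_sub _ _
        _ = (H - s) * |c1 a - c1 b| + (H - t) * |c2 a - c2 b| := by
            rw [abs_mul, abs_mul, abs_of_nonneg (by linarith : (0:ℝ) ≤ H - s),
              abs_of_nonneg (by linarith : (0:ℝ) ≤ H - t)]
        _ ≤ (H - s) * (3*|a-b|) + (H - t) * (3*|a-b|) := by
            apply add_le_add
            · exact mul_le_mul_of_nonneg_left e1 (by linarith)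
            · exact mul_le_mul_of_nonneg_left e2 (by linarith)
        _ = 3 * (H - s + (H - t)) * |a - b| := by ring
    exact lip1.prodMk lip2
  -- height positivity constraint
  have hcons : ∀ σ ∈ Icc (0:ℝ) 1, 0 ≤ (γ σ).2 := fun σ _ => hh0 σ
  -- wDist ≤ wLength γ
  have hwd : wDist dist 0 (x, s) (y, t) ≤ wLength dist γ 0 1 := by
    rw [wDist]
    exact iInf_le_of_le γ (iInf_le_of_le hLip (iInf_le_of_le hγ0 (iInf_le_of_le hγ1
      (iInf_le_of_le hcons le_rfl))))
  -- key estimate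
  set μ : ℝ → ℝ := fun σ => Real.exp (-H) * L * c3 σ with hμ
  set ν : ℝ → ℝ := fun σ => (H - s) * c1 σ + (H - t) * c2 σ with hν
  have hbound := wLength_le_bound γ μ ν ?_
  · refine hwd.trans (hbound.trans (ENNReal.ofReal_le_ofReal ?_))
    have hc30 : c3 0 = 0 := cl01_of_nonpos (by norm_num)
    have hc31 : c3 1 = 1 := cl01_of_one_le (by norm_num)
    have hc10 : c1 0 = 0 := cl01_of_nonpos (by norm_num)
    have hc11 : c1 1 = 1 := cl01_of_one_le (by norm_num)
    have hc20 : c2 0 = 0 := cl01_of_nonpos (by norm_num)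
    have hc21' : c2 1 = 1 := cl01_of_one_le (by norm_num)
    simp only [hμ, hν, hc30, hc31, hc10, hc11, hc20, hc21', mul_zero, mul_one, sub_zero, add_zero,
      zero_add]
    -- goal : exp(-H)*L + ((H-s) + (H-t)) ≤ phiW (x,s) (y,t) + 2
    have habs : 2 * T - s - t = |s - t| := by
      rcases le_total s t with hst | hst
      · rw [abs_of_nonpos (by linarith), hT, max_eq_right hst]; ring
      · rw [abs_of_nonneg (by linarith), hT, max_eq_left hst]; ring
    have hexp1 : Real.exp (-H) ≤ 1 := Real.exp_le_one_iff.mpr (by linarith)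
    have hexpu : Real.exp (-H) * u ≤ 1 := by
      set z := u * Real.exp (-T) with hz
      have hz0 : 0 ≤ z := by positivity
      have hsplit : Real.exp (-H) * u = Real.exp (-lam) * z := by
        rw [hz, hH, neg_add, Real.exp_add]; ring
      rw [hsplit]
      rcases lt_or_ge 0 lam with hlamp | hlamn
      · have hlz : lam = Real.log z := by
          rcases max_cases 0 (Real.log z) with ⟨h1, h2⟩ | ⟨h1, h2⟩
          · exfalso; rw [hlam, h1] at hlamp; exact lt_irrefl 0 hlamp
          · rw [hlam, h1]
        have hzpos : 0 < z := by
          rcases eq_or_lt_of_le hz0 with hz' | hz'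
          · exfalso; rw [← hz', Real.log_zero] at hlz; linarith
          · exact hz'
        rw [hlz, Real.exp_neg, Real.exp_log hzpos, inv_mul_cancel₀ (ne_of_gt hzpos)]
      · have hlamz : lam = 0 := le_antisymm hlamn hlam0
        have hzle : z ≤ 1 := by
          by_contra hz1
          push_neg at hz1
          have hlp := Real.log_pos hz1
          have hmx : (0:ℝ) ⊔ Real.log z = 0 := by rw [← hlam]; exact hlamz
          have := le_max_right (0:ℝ) (Real.log z)
          linarith [hmx ▸ this]
        rw [hlamz]
        simpa using hzle
    have hphiW : phiW (x, s) (y, t) = |s - t| + 2 * lam := by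
      unfold phiW
      simp only [hlam, hT, hu]
    rw [hphiW]
    have : Real.exp (-H) * L = Real.exp (-H) * u + Real.exp (-H) := by rw [hL]; ring
    rw [hH]
    nlinarith [hexpu, hexp1, habs]
  · -- verify hypothesis of wLength_le_bound
    intro a b ha hb hab
    constructor
    · -- horizontal estimate
      by_cases hc3eq : c3 a = c3 b
      · have hd0 : dist (γ a).1 (γ b).1 = 0 := by
          have := hgdist a b hab
          rw [hc3eq, sub_self, mul_zero] at this
          simp only [hγ] at *
          exact le_antisymm this dist_nonneg
        rw [hd0, mul_zero]
        simp only [hμ, hc3eq]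
        linarith
      · have hlt : c3 a < c3 b := lt_of_le_of_ne (cl01_mono (by linarith)) hc3eq
        have hb3 : 1/3 < b := by
          by_contra hb3
          push_neg at hb3
          simp only [hc3] at hlt
          rw [cl01_of_nonpos (by linarith : 3*a - 1 ≤ 0),
            cl01_of_nonpos (by linarith : 3*b - 1 ≤ 0)] at hlt
          exact lt_irrefl 0 hlt
        have ha3 : a < 2/3 := by
          by_contra ha3
          push_neg at ha3
          simp only [hc3] at hlt
          rw [cl01_of_one_le (by linarith : (1:ℝ) ≤ 3*a - 1),
            cl01_of_one_le (by linarith : (1:ℝ) ≤ 3*b - 1)] at hlt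
          exact lt_irrefl 1 hlt
        set σ₀ := max a (1/3) with hσ₀
        have hσ₀ab : σ₀ ∈ Icc a b := ⟨le_max_left _ _, max_le hab hb3.le⟩
        have hσ₀13 : 1/3 ≤ σ₀ := le_max_right _ _
        have hσ₀23 : σ₀ ≤ 2/3 := max_le ha3.le (by norm_num)
        have hhσ₀ : hgt σ₀ = H := by
          simp only [hhgt, hc1, hc2]
          rw [cl01_of_one_le (by linarith : (1:ℝ) ≤ 3*σ₀),
            cl01_of_nonpos (by linarith : 3*σ₀ - 2 ≤ 0)]
          ring
        have hsup : (⨆ s' ∈ Icc a b, (γ s').2) = H := by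
          apply le_antisymm
          · apply Real.iSup_le _ hH0
            intro σ
            apply Real.iSup_le _ hH0
            intro _
            exact hhle σ
          · have hbdd : BddAbove (range fun σ => ⨆ _ : σ ∈ Icc a b, (γ σ).2) := by
              refine ⟨H, ?_⟩
              rintro _ ⟨σ, rfl⟩
              show (⨆ _ : σ ∈ Icc a b, (γ σ).2) ≤ H
              by_cases hσ : σ ∈ Icc a b
              · rw [ciSup_pos hσ]; exact hhle σ
              · haveI : IsEmpty (σ ∈ Icc a b) := isEmpty_Prop.mpr hσ
                rw [Real.iSup_of_isEmpty]
                exact hH0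
            have hstep : (⨆ (_ : σ₀ ∈ Icc a b), (γ σ₀).2) = (γ σ₀).2 := ciSup_pos hσ₀ab
            have hγσ₀ : (γ σ₀).2 = H := by simp only [hγ]; exact hhσ₀
            have hfin : (⨆ (_ : σ₀ ∈ Icc a b), (γ σ₀).2) ≤ ⨆ σ ∈ Icc a b, (γ σ).2 :=
              le_ciSup hbdd σ₀
            rw [hstep, hγσ₀] at hfin
            exact hfin
        rw [hsup]
        have hstep2 : dist (γ a).1 (γ b).1 ≤ L * (c3 b - c3 a) := by
          simp only [hγ]
          exact hgdist a b hab
        have hmul : Real.exp (-H) * dist (γ a).1 (γ b).1 ≤ Real.exp (-H) * (L * (c3 b - c3 a)) :=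
          mul_le_mul_of_nonneg_left hstep2 (Real.exp_nonneg _)
        refine hmul.trans (le_of_eq ?_)
        simp only [hμ]
        ring
    · -- vertical estimate
      have d1 : 0 ≤ c1 b - c1 a := sub_nonneg.mpr (cl01_mono (by linarith))
      have d2 : 0 ≤ c2 b - c2 a := sub_nonneg.mpr (cl01_mono (by linarith))
      simp only [hγ, hhgt, hν]
      have expand : s + (H - s) * c1 b - (H - t) * c2 b - (s + (H - s) * c1 a - (H - t) * c2 a)
          = (H - s) * (c1 b - c1 a) - (H - t) * (c2 b - c2 a) := by ring
      rw [expand]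
      have m1 : 0 ≤ (H - s) * (c1 b - c1 a) := mul_nonneg (by linarith) d1
      have m2 : 0 ≤ (H - t) * (c2 b - c2 a) := mul_nonneg (by linarith) d2
      rw [abs_le]
      constructor <;> linarith

end Upper

lemma two_max_sub : ∀ s t : ℝ, 2 * max s t - s - t = |s - t| := by
  intro s t
  rcases le_total s t with hst | hst
  · rw [abs_of_nonpos (by linarith), max_eq_right hst]; ring
  · rw [abs_of_nonneg (by linarith), max_eq_left hst]; ring

lemma real_lower (s t u M : ℝ) (hs : 0 ≤ s) (ht : 0 ≤ t) (hu : 0 ≤ u)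
    (hMs : s ≤ M) (hMt : t ≤ M) :
    (|s - t| + 2 * max 0 (Real.log (u * Real.exp (-(max s t))))) / 3 ≤
      max (max (Real.exp (-M) * u) |t - s|) ((M - s) + (M - t)) := by
  set T := max s t with hT
  set z := u * Real.exp (-T) with hz
  set lam := max 0 (Real.log z) with hlam
  have hlam0 : 0 ≤ lam := le_max_left _ _
  have habs : 2 * T - s - t = |s - t| := by rw [hT]; exact two_max_sub s t
  have habs' : |s - t| = |t - s| := abs_sub_comm s t
  have h3 : |t - s| ≤ max (max (Real.exp (-M) * u) |t - s|) ((M - s) + (M - t)) :=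
    le_max_of_le_left (le_max_right _ _)
  rcases eq_or_lt_of_le hlam0 with hlamz | hlamp
  · rw [← hlamz]
    have h0 := abs_nonneg (s - t)
    rw [habs'] at *
    linarith
  · have hlz : lam = Real.log z := by
      rcases max_cases 0 (Real.log z) with ⟨h1, h2⟩ | ⟨h1, h2⟩
      · exfalso; rw [hlam, h1] at hlamp; exact lt_irrefl 0 hlamp
      · rw [hlam, h1]
    have hzpos : 0 < z := by
      rcases eq_or_lt_of_le (show (0:ℝ) ≤ z by rw [hz]; positivity) with hz' | hz'
      · exfalso; rw [← hz', Real.log_zero] at hlz; linarith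
      · exact hz'
    have hTM : T ≤ M := max_le hMs hMt
    by_cases hM3 : T + lam/3 ≤ M
    · have key : |s - t| + (2/3) * lam ≤ (M - s) + (M - t) := by
        have : 2 * T - s - t + (2/3) * lam ≤ 2 * M - s - t := by linarith
        rw [habs] at this
        linarith
      have := le_max_right (max (Real.exp (-M) * u) |t - s|) ((M - s) + (M - t))
      have h0 := abs_nonneg (s - t)
      linarith
    · push_neg at hM3
      have hzexp : z = Real.exp lam := by rw [hlz, Real.exp_log hzpos]
      have huz : z * Real.exp T = u := by
        rw [hz, mul_assoc, ← Real.exp_add]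
        simp
      have hstep : Real.exp ((2/3) * lam) ≤ Real.exp (-M) * u := by
        rw [← huz, hzexp, ← Real.exp_add, ← Real.exp_add]
        apply Real.exp_le_exp.mpr
        linarith
      have hexp2 : (4/3) * lam ≤ Real.exp ((2/3) * lam) := by
        have := two_mul_le_exp (show (0:ℝ) ≤ (2/3) * lam by linarith)
        linarith
      have h1 : (4/3) * lam ≤ Real.exp (-M) * u := le_trans hexp2 hstep
      have h2 : Real.exp (-M) * u ≤ max (max (Real.exp (-M) * u) |t - s|) ((M - s) + (M - t)) :=
        le_max_of_le_left (le_max_left _ _)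
      have h0 := abs_nonneg (s - t)
      rw [habs'] at *
      linarith

section Lower

set_option maxHeartbeats 1000000

lemma step_mono {t₀ : ℝ} (h0 : 0 ≤ t₀) (h1 : t₀ ≤ 1) :
    Monotone (fun i : ℕ => if i = 0 then (0:ℝ) else if i = 1 then t₀ else 1) := by
  intro i j hij
  rcases i with _ | _ | i <;> rcases j with _ | _ | j <;> simp_all <;> omega

lemma step_mem {t₀ : ℝ} (h0 : 0 ≤ t₀) (h1 : t₀ ≤ 1) :
    ∀ i : ℕ, (if i = 0 then (0:ℝ) else if i = 1 then t₀ else 1) ∈ Icc (0:ℝ) 1 := by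
  intro i
  rcases i with _ | _ | i <;> simp_all

variable {Y : Type*} [MetricSpace Y]

lemma phi_le_wDist (p q : Y × ℝ) (hp : 0 ≤ p.2) (hq : 0 ≤ q.2) :
    ENNReal.ofReal (phiW p q / 3) ≤ wDist dist 0 p q := by
  rw [wDist]
  refine le_iInf fun γ => le_iInf fun hLip => le_iInf fun hγ0 => le_iInf fun hγ1 =>
    le_iInf fun hcons => ?_
  obtain ⟨K, hK⟩ := hLip
  have hcont : ContinuousOn (fun σ => (γ σ).2) (Icc 0 1) :=
    (continuous_snd.comp hK.continuous).continuousOn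
  obtain ⟨t₀, ht₀, hmax⟩ :=
    isCompact_Icc.exists_isMaxOn (nonempty_Icc.mpr zero_le_one) hcont
  set M := (γ t₀).2 with hM
  have hM0 : 0 ≤ M := hcons t₀ ht₀
  have hMs : p.2 ≤ M := by
    have := hmax (left_mem_Icc.mpr zero_le_one)
    simp only [mem_setOf_eq, hγ0] at this
    exact this
  have hMt : q.2 ≤ M := by
    have := hmax (right_mem_Icc.mpr zero_le_one)
    simp only [mem_setOf_eq, hγ1] at this
    exact this
  have hmaxle : ∀ σ, σ ∈ Icc (0:ℝ) 1 → (γ σ).2 ≤ M := fun σ hσ => hmax hσ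
  -- the sup over [0,1]
  have hsup : (⨆ s ∈ Icc (0:ℝ) 1, (γ s).2) = M := by
    apply le_antisymm
    · exact Real.iSup_le (fun σ => Real.iSup_le (fun hσ => hmaxle σ hσ) hM0) hM0
    · have hbdd : BddAbove (range fun σ => ⨆ _ : σ ∈ Icc (0:ℝ) 1, (γ σ).2) := by
        refine ⟨M, ?_⟩
        rintro _ ⟨σ, rfl⟩
        show (⨆ _ : σ ∈ Icc (0:ℝ) 1, (γ σ).2) ≤ M
        by_cases hσ : σ ∈ Icc (0:ℝ) 1
        · rw [ciSup_pos hσ]; exact hmaxle σ hσ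
        · haveI : IsEmpty (σ ∈ Icc (0:ℝ) 1) := isEmpty_Prop.mpr hσ
          rw [Real.iSup_of_isEmpty]; exact hM0
      have hstep : (⨆ (_ : t₀ ∈ Icc (0:ℝ) 1), (γ t₀).2) = (γ t₀).2 := ciSup_pos ht₀
      have hfin : (⨆ (_ : t₀ ∈ Icc (0:ℝ) 1), (γ t₀).2) ≤ ⨆ σ ∈ Icc (0:ℝ) 1, (γ σ).2 :=
        le_ciSup hbdd t₀
      rw [hstep] at hfin
      exact hfin
  -- first chord : partition 0, 1
  set u1 : ℕ → ℝ := fun i => min (i:ℝ) 1 with hu1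
  have hu1mono : Monotone u1 := fun i j hij => min_le_min (Nat.cast_le.mpr hij) le_rfl
  have hu1mem : ∀ i, u1 i ∈ Icc (0:ℝ) 1 :=
    fun i => ⟨le_min (Nat.cast_nonneg i) zero_le_one, min_le_right _ _⟩
  have hu10 : u1 0 = 0 := by simp [hu1]
  have hu11 : u1 1 = 1 := by simp [hu1]
  have chord1 : ENNReal.ofReal (Real.sqrt ((Real.exp (-M) * dist p.1 q.1)^2 +
      (q.2 - p.2)^2)) ≤ wLength dist γ 0 1 := by
    rw [wLength]
    apply le_iSup_of_le ⟨(1, u1), hu1mono, hu1mem⟩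
    dsimp only
    rw [Finset.sum_range_one]
    apply ENNReal.ofReal_le_ofReal
    apply le_of_eq
    rw [zero_add, hu10, hu11, hγ0, hγ1, hsup]
  -- second partition : 0, t₀, 1
  set u2 : ℕ → ℝ := fun i => if i = 0 then 0 else if i = 1 then t₀ else 1 with hu2
  have hu20 : u2 0 = 0 := by simp [hu2]
  have hu21 : u2 1 = t₀ := by simp [hu2]
  have hu22 : u2 2 = 1 := by simp [hu2]
  have hu2mono : Monotone u2 := step_mono ht₀.1 ht₀.2
  have hu2mem : ∀ i, u2 i ∈ Icc (0:ℝ) 1 := step_mem ht₀.1 ht₀.2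
  have chord2 : ENNReal.ofReal ((M - p.2) + (M - q.2)) ≤ wLength dist γ 0 1 := by
    rw [wLength]
    apply le_iSup_of_le ⟨(2, u2), hu2mono, hu2mem⟩
    dsimp only
    rw [Finset.sum_range_succ, Finset.sum_range_one]
    rw [zero_add, hu20, hu21, hu22]
    rw [ENNReal.ofReal_add (by linarith) (by linarith)]
    apply add_le_add
    · apply ENNReal.ofReal_le_ofReal
      rw [hγ0]
      calc M - p.2 ≤ |(γ t₀).2 - p.2| := by
            rw [← hM]; exact le_abs_self _
        _ ≤ Real.sqrt ((Real.exp (-(⨆ s ∈ Icc ((0:ℝ)) t₀, (γ s).2)) *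
              dist p.1 (γ t₀).1)^2 + ((γ t₀).2 - p.2)^2) := abs_le_sqrt_right _ _
    · apply ENNReal.ofReal_le_ofReal
      rw [hγ1]
      calc M - q.2 ≤ |q.2 - (γ t₀).2| := by
            rw [← hM, abs_sub_comm]; exact le_abs_self _
        _ ≤ Real.sqrt ((Real.exp (-(⨆ s ∈ Icc t₀ (1:ℝ), (γ s).2)) *
              dist (γ t₀).1 q.1)^2 + (q.2 - (γ t₀).2)^2) := abs_le_sqrt_right _ _
  -- extract the three individual bounds
  have bA : ENNReal.ofReal (Real.exp (-M) * dist p.1 q.1) ≤ wLength dist γ 0 1 := by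
    refine le_trans (ENNReal.ofReal_le_ofReal ?_) chord1
    have := abs_le_sqrt_left (Real.exp (-M) * dist p.1 q.1) (q.2 - p.2)
    rwa [abs_of_nonneg (mul_nonneg (Real.exp_nonneg _) dist_nonneg)] at this
  have bB : ENNReal.ofReal |q.2 - p.2| ≤ wLength dist γ 0 1 :=
    le_trans (ENNReal.ofReal_le_ofReal (abs_le_sqrt_right _ _)) chord1
  have bC : ENNReal.ofReal ((M - p.2) + (M - q.2)) ≤ wLength dist γ 0 1 := chord2
  -- combine
  have harith := real_lower p.2 q.2 (dist p.1 q.1) M hp hq dist_nonneg hMs hMt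
  have : ENNReal.ofReal (phiW p q / 3) ≤
      ENNReal.ofReal (max (max (Real.exp (-M) * dist p.1 q.1) |q.2 - p.2|)
        ((M - p.2) + (M - q.2))) := by
    apply ENNReal.ofReal_le_ofReal
    unfold phiW
    exact harith
  refine this.trans ?_
  rcases max_cases (max (Real.exp (-M) * dist p.1 q.1) |q.2 - p.2|) ((M - p.2) + (M - q.2))
    with ⟨hmx, _⟩ | ⟨hmx, _⟩
  · rw [hmx]
    rcases max_cases (Real.exp (-M) * dist p.1 q.1) |q.2 - p.2| with ⟨hmx2, _⟩ | ⟨hmx2, _⟩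
    · rw [hmx2]; exact bA
    · rw [hmx2]; exact bB
  · rw [hmx]; exact bC

end Lower

lemma logplus_comp {u u' w A B : ℝ} (hu : 0 ≤ u) (hu' : 0 ≤ u') (hle : u' ≤ A*u + B)
    (hA : 1 ≤ A) (hB : 0 ≤ B) (hw0 : 0 < w) (hw1 : w ≤ 1) :
    max 0 (Real.log (u' * w)) ≤ max 0 (Real.log (u * w)) + Real.log (2*(A+B)) := by
  have hAB : 1 ≤ A + B := by linarith
  have hlog2 : 0 < Real.log (2*(A+B)) := Real.log_pos (by linarith)
  have hmax0 : 0 ≤ max 0 (Real.log (u * w)) := le_max_left _ _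
  by_cases h1 : u' * w ≤ 1
  · have hlogn : Real.log (u' * w) ≤ 0 := Real.log_nonpos (by positivity) h1
    rw [max_eq_left hlogn]
    linarith
  · push_neg at h1
    have hu'wpos : 0 < u' * w := lt_trans zero_lt_one h1
    have key : u' * w ≤ 2*(A+B) * max (u*w) 1 := by
      have e1 : u' * w ≤ A*(u*w) + B*w := by nlinarith
      have e2 : B*w ≤ B := by nlinarith
      have e3 : A*(u*w) ≤ A * max (u*w) 1 :=
        mul_le_mul_of_nonneg_left (le_max_left _ _) (by linarith)
      have e4 : B ≤ B * max (u*w) 1 :=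
        le_mul_of_one_le_right hB (le_max_right _ _)
      have e6 : A * max (u*w) 1 + B * max (u*w) 1 = (A+B) * max (u*w) 1 := by ring
      have e7 : (0:ℝ) ≤ (A+B) * max (u*w) 1 := by positivity
      nlinarith
    have hmaxpos : (0:ℝ) < max (u*w) 1 := lt_of_lt_of_le zero_lt_one (le_max_right _ _)
    have hlogs : Real.log (u'*w) ≤ Real.log (2*(A+B)) + Real.log (max (u*w) 1) := by
      calc Real.log (u'*w) ≤ Real.log (2*(A+B) * max (u*w) 1) :=
          Real.log_le_log hu'wpos key
        _ = Real.log (2*(A+B)) + Real.log (max (u*w) 1) :=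
          Real.log_mul (by positivity) (ne_of_gt hmaxpos)
    have hlogmax : Real.log (max (u*w) 1) ≤ max 0 (Real.log (u*w)) := by
      rcases le_total (u*w) 1 with h | h
      · rw [max_eq_right h, Real.log_one]; exact le_max_left _ _
      · rw [max_eq_left h]; exact le_max_right _ _
    have hpos : 0 ≤ Real.log (u'*w) := (Real.log_pos h1).le
    rw [max_eq_right hpos]
    linarith


/-- If `X` and `X'` are quasi-isometric proper length spaces, then the
warped products `W(X)` and `W(X')` (over `[0,∞)` with warping function `e^{-t}`) are
quasi-isometric. -/
theorem warped_products_quasiIsometric {X X' : Type*} [MetricSpace X] [MetricSpace X']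
    [ProperSpace X] [ProperSpace X'] (hX : IsLengthSpace X) (hX' : IsLengthSpace X')
    (K C : ℝ) (hK : 1 ≤ K) (hC : 0 ≤ C) (f : X → X') (hf : QuasiIsometry K C f) :
    ∃ K' C' : ℝ, 1 ≤ K' ∧ 0 ≤ C' ∧ ∃ F : X × ℝ → X' × ℝ,
      (∀ p : X × ℝ, 0 ≤ p.2 → 0 ≤ (F p).2) ∧
      (∀ p q : X × ℝ, 0 ≤ p.2 → 0 ≤ q.2 →
        wDistR dist 0 p q / K' - C' ≤ wDistR dist 0 (F p) (F q) ∧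
        wDistR dist 0 (F p) (F q) ≤ K' * wDistR dist 0 p q + C') ∧
      (∀ q : X' × ℝ, 0 ≤ q.2 → ∃ p : X × ℝ, 0 ≤ p.2 ∧ wDistR dist 0 (F p) q ≤ C') := by
  set c₀ := Real.log (2*(K + (K*C + C))) with hc₀
  have hc₀pos : 0 < c₀ := Real.log_pos (by nlinarith)
  refine ⟨3, 2*c₀ + 2*C + 4, by norm_num, by linarith, fun p => (f p.1, p.2), fun p hp => hp, ?_, ?_⟩
  · -- the QI estimates
    intro p q hp hq
    set F : X × ℝ → X' × ℝ := fun p => (f p.1, p.2) with hF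
    -- real-valued bounds in X
    have hup := wDist_le_phi hX p q hp hq
    have hlow := phi_le_wDist p q hp hq
    have hfin : wDist dist 0 p q ≠ ⊤ := (hup.trans_lt ENNReal.ofReal_lt_top).ne
    have hDup : wDistR dist 0 p q ≤ phiW p q + 2 :=
      ENNReal.toReal_le_of_le_ofReal (by linarith [phiW_nonneg p q]) hup
    have hDlow : phiW p q / 3 ≤ wDistR dist 0 p q :=
      (ENNReal.ofReal_le_iff_le_toReal hfin).mp hlow
    -- real-valued bounds in X'
    have hp' : (0:ℝ) ≤ ((f p.1, p.2) : X' × ℝ).2 := hp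
    have hq' : (0:ℝ) ≤ ((f q.1, q.2) : X' × ℝ).2 := hq
    have hup' := wDist_le_phi hX' (f p.1, p.2) (f q.1, q.2) hp' hq'
    have hlow' := phi_le_wDist (f p.1, p.2) (f q.1, q.2) hp' hq'
    have hfin' : wDist dist 0 ((f p.1, p.2) : X' × ℝ) (f q.1, q.2) ≠ ⊤ :=
      (hup'.trans_lt ENNReal.ofReal_lt_top).ne
    have hnn' : 0 ≤ phiW ((f p.1, p.2) : X' × ℝ) (f q.1, q.2) :=
      phiW_nonneg _ _
    have hDup' : wDistR dist 0 ((f p.1, p.2) : X' × ℝ) (f q.1, q.2) ≤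
        phiW ((f p.1, p.2) : X' × ℝ) (f q.1, q.2) + 2 :=
      ENNReal.toReal_le_of_le_ofReal (by linarith) hup'
    have hDlow' : phiW ((f p.1, p.2) : X' × ℝ) (f q.1, q.2) / 3 ≤
        wDistR dist 0 ((f p.1, p.2) : X' × ℝ) (f q.1, q.2) :=
      (ENNReal.ofReal_le_iff_le_toReal hfin').mp hlow'
    -- compare phiW's
    obtain ⟨hemb, hdense⟩ := hf
    obtain ⟨hd1, hd2⟩ := hemb p.1 q.1
    set T := max p.2 q.2 with hT
    have hT0 : 0 ≤ T := le_trans hp (le_max_left _ _)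
    have hw0 : 0 < Real.exp (-T) := Real.exp_pos _
    have hw1 : Real.exp (-T) ≤ 1 := Real.exp_le_one_iff.mpr (by linarith)
    have hKpos : 0 < K := by linarith
    have hcomp1 : phiW ((f p.1, p.2) : X' × ℝ) (f q.1, q.2) ≤ phiW p q + 2*c₀ := by
      unfold phiW
      simp only
      have hle : dist (f p.1) (f q.1) ≤ K * dist p.1 q.1 + (K*C + C) := by nlinarith
      have := logplus_comp dist_nonneg dist_nonneg hle hK (by positivity) hw0 hw1
      rw [hc₀]
      linarith
    have hcomp2 : phiW p q ≤ phiW ((f p.1, p.2) : X' × ℝ) (f q.1, q.2) + 2*c₀ := by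
      unfold phiW
      simp only
      have hle : dist p.1 q.1 ≤ K * dist (f p.1) (f q.1) + (K*C + C) := by
        have : dist p.1 q.1 / K - C ≤ dist (f p.1) (f q.1) := hd1
        have h2 : dist p.1 q.1 / K ≤ dist (f p.1) (f q.1) + C := by linarith
        have h3 : dist p.1 q.1 ≤ K * (dist (f p.1) (f q.1) + C) := by
          rw [div_le_iff₀ hKpos] at h2
          linarith [h2]
        nlinarith
      have := logplus_comp dist_nonneg dist_nonneg hle hK (by positivity) hw0 hw1
      rw [hc₀]
      linarith
    constructor
    · -- lower bound
      have : wDistR dist 0 p q ≤ 3 * wDistR dist 0 ((f p.1, p.2) : X' × ℝ) (f q.1, q.2)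
          + 2*c₀ + 2 := by
        calc wDistR dist 0 p q ≤ phiW p q + 2 := hDup
          _ ≤ phiW ((f p.1, p.2) : X' × ℝ) (f q.1, q.2) + 2*c₀ + 2 := by linarith
          _ ≤ 3 * wDistR dist 0 ((f p.1, p.2) : X' × ℝ) (f q.1, q.2) + 2*c₀ + 2 := by
            linarith [hDlow']
      simp only [hF]
      linarith
    · -- upper bound
      have : wDistR dist 0 ((f p.1, p.2) : X' × ℝ) (f q.1, q.2) ≤
          3 * wDistR dist 0 p q + 2*c₀ + 2 := by
        calc wDistR dist 0 ((f p.1, p.2) : X' × ℝ) (f q.1, q.2) ≤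
            phiW ((f p.1, p.2) : X' × ℝ) (f q.1, q.2) + 2 := hDup'
          _ ≤ phiW p q + 2*c₀ + 2 := by linarith
          _ ≤ 3 * wDistR dist 0 p q + 2*c₀ + 2 := by linarith [hDlow]
      simp only [hF]
      linarith
  · -- density
    intro q hq
    obtain ⟨hemb, hdense⟩ := hf
    obtain ⟨x, hx⟩ := hdense q.1
    refine ⟨(x, q.2), hq, ?_⟩
    have hp' : (0:ℝ) ≤ ((f x, q.2) : X' × ℝ).2 := hq
    have hup := wDist_le_phi hX' (f x, q.2) (q.1, q.2) hp' hq
    have hphi : phiW ((f x, q.2) : X' × ℝ) (q.1, q.2) ≤ 2*C := by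
      unfold phiW
      simp only [sub_self, abs_zero, zero_add, max_self]
      have hd : dist (f x) q.1 * Real.exp (-q.2) ≤ C := by
        have h1 : dist (f x) q.1 ≤ C := by rw [dist_comm]; exact hx
        have h2 : Real.exp (-q.2) ≤ 1 := Real.exp_le_one_iff.mpr (by linarith)
        nlinarith [dist_nonneg (x := f x) (y := q.1), Real.exp_pos (-q.2)]
      have hlog : Real.log (dist (f x) q.1 * Real.exp (-q.2)) ≤ C :=
        le_trans (Real.log_le_self (by positivity)) hd
      have : max 0 (Real.log (dist (f x) q.1 * Real.exp (-q.2))) ≤ C := max_le hC hlog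
      linarith
    have hDup : wDistR dist 0 ((f x, q.2) : X' × ℝ) (q.1, q.2) ≤
        phiW ((f x, q.2) : X' × ℝ) (q.1, q.2) + 2 :=
      ENNReal.toReal_le_of_le_ofReal
        (by have := phiW_nonneg ((f x, q.2) : X' × ℝ) (q.1, q.2); linarith) hup
    have hqeq : ((q.1, q.2) : X' × ℝ) = q := Prod.ext rfl rfl
    rw [hqeq] at hDup
    simp only
    linarith
end
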